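/- For n ≥ 3, the valued structure C_n (an n×n directed grid with specially weighted unary function μ) is a core. Concretely: let C_n have universe {1,…,n}², binary f with f((i,j),(i',j')) = ∞ if i ≤ i', j ≤ j', (i'−i)+(j'−j) = 1 and 0 otherwise, and unary μ taking values as follows with M > n²: on diagonal D_k = {(i,j) : i+j−1 = k} for k ≤ n, enumerate D_k from top-left to bottom-right as x₁,…,x_{|D_k|}; set μ-values on D₁, D₂, D₃ to (1), (M,1), (M³,M²,M⁴) respectively, on D_k for 4 ≤ k ≤ n to (M,1,…,1,M), and μ = 1 on all other elements. Then every mapping g : C_n → C_n satisfying (a) g is a homomorphism of the positive parts (g maps f-arcs to f-arcs) and (b) μ(x) ≤ μ(g(x)) for all x, is the identity; consequently C_n is a core. -/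

import Mathlib

/-!
An arc-preserving self-map `g` of the grid preserves the level `i + j` (it maps the longest path,
of length `2n - 2`, onto a path), so it can be shown to be the identity diagonal by diagonal: an
inner point has two fixed predecessors, which pin down its image, while a boundary point has one
fixed predecessor and could only be moved to the neighbouring point of its diagonal, which has
smaller `μ`. On the first three diagonals the weights `M, M², M³, M⁴` are what break the
transpose symmetry of the grid.

For the core property, every map `g` in the support of an inverse fractional homomorphism `ω`
preserves the infinite part, i.e. the arcs. Testing `ω` against the weight `1 / μ` gives
`∑ ω g · ∑ₓ μ x / μ (g x) ≤ n²`, with equality for `g = id`; a map lowering `μ` anywhere pays a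
ratio `≥ M > n²` there, so every map in the support is the identity.
-/

open scoped Classical
noncomputable section

/-- The value codomain `ℚ≥0 ∪ {∞}`. -/
abbrev Val : Type := WithTop NNRat

/-- A valued structure over a signature given by a type `S` of function symbols
with arities `ar`. -/
structure VStruct (S : Type) (ar : S → ℕ) where
  U : Type
  [fintypeU : Fintype U]
  [decU : DecidableEq U]
  [nonemptyU : Nonempty U]
  val : (f : S) → (Fin (ar f) → U) → Val

attribute [instance] VStruct.fintypeU VStruct.decU VStruct.nonemptyU

variable {S : Type} [Fintype S] {ar : S → ℕ}

/-- Cost of a mapping `h` between the universes of two valued structures. -/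
def VStruct.cost (A B : VStruct S ar) (h : A.U → B.U) : Val :=
  ∑ f : S, ∑ x : Fin (ar f) → A.U, A.val f x * B.val f (h ∘ x)

/-- `opt(A,B)`: the minimum cost over all mappings. -/
def VStruct.opt (A B : VStruct S ar) : Val :=
  Finset.univ.inf' Finset.univ_nonempty (A.cost B)

/-- `f^A(g⁻¹(x))`: sum of `f^A` over the `g`-preimage of the tuple `x`. -/
def VStruct.preSum (A B : VStruct S ar) (g : A.U → B.U) (f : S)
    (x : Fin (ar f) → B.U) : Val :=
  ∑ y ∈ Finset.univ.filter (fun y : Fin (ar f) → A.U => g ∘ y = x), A.val f y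

/-- Inverse fractional homomorphism from `A` to `B`. -/
def IsIFH (A B : VStruct S ar) (ω : (A.U → B.U) → NNRat) : Prop :=
  (∑ g : A.U → B.U, ω g) = 1 ∧
  ∀ (f : S) (x : Fin (ar f) → B.U),
    (∑ g : A.U → B.U, (ω g : Val) * A.preSum B g f x) ≤ B.val f x

/-- `A ≼ B`: `A` improves `B`. -/
def Improves (A B : VStruct S ar) : Prop :=
  ∀ C : VStruct S ar, A.opt C ≤ B.opt C

/-- Valued equivalence. -/
def VEquiv (A B : VStruct S ar) : Prop :=
  ∀ C : VStruct S ar, A.opt C = B.opt C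

/-- A valued structure is a core if every inverse fractional homomorphism from
it to itself has only surjective mappings in its support. -/
def IsCore (A : VStruct S ar) : Prop :=
  ∀ ω : (A.U → A.U) → NNRat, IsIFH A A ω →
    ∀ g : A.U → A.U, 0 < ω g → Function.Surjective g

/-- Signature with a binary symbol `f` and a unary symbol `mu`. -/
inductive GSym where
  | f | mu
deriving DecidableEq

instance instFintypeGSym : Fintype GSym where
  elems := {GSym.f, GSym.mu}
  complete := fun x => by cases x <;> simp

/-- Arities. -/
def gAr : GSym → ℕ
  | .f => 2
  | .mu => 1

/-- Arc of the directed `n × n` grid (0-based `Fin` coordinates). -/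
def arcF {n : ℕ} (a b : Fin n × Fin n) : Prop :=
  (b.1.val = a.1.val + 1 ∧ b.2 = a.2) ∨ (b.1 = a.1 ∧ b.2.val = a.2.val + 1)

/-- The weight `μ^{C_n}` at the (1-based) grid position `(i,j)`:
on diagonal `D_k` (`k = i + j - 1 ≤ n`), enumerated top-left to bottom-right
(positions indexed by `j`), the values are `(1)`, `(M,1)`, `(M³,M²,M⁴)`,
and `(M,1,…,1,M)` for `4 ≤ k ≤ n`; all remaining elements get `1`. -/
def muC (n M i j : ℕ) : ℕ :=
  if n < i + j - 1 then 1
  else if i + j - 1 = 1 then 1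
  else if i + j - 1 = 2 then (if j = 1 then M else 1)
  else if i + j - 1 = 3 then
    (if j = 1 then M ^ 3 else if j = 2 then M ^ 2 else M ^ 4)
  else if j = 1 ∨ j = i + j - 1 then M else 1

/-- Values of the structure `C_n`. -/
def gridCval (n M : ℕ) : (s : GSym) → (Fin (gAr s) → Fin n × Fin n) → Val
  | .f => fun x => if arcF (x ⟨0, by decide⟩) (x ⟨1, by decide⟩) then ⊤ else 0
  | .mu => fun x =>
      ((muC n M ((x ⟨0, by decide⟩).1.val + 1) ((x ⟨0, by decide⟩).2.val + 1)
        : NNRat) : Val)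

/-- The valued structure `C_n` (with parameter `M`). -/
def gridC (n M : ℕ) (hn : 0 < n) : VStruct GSym gAr where
  U := Fin n × Fin n
  nonemptyU := ⟨(⟨0, hn⟩, ⟨0, hn⟩)⟩
  val := gridCval n M

open Finset

namespace IsIFH

variable {F : Type} {arity : F → ℕ} {A B : VStruct F arity} {ω : (A.U → B.U) → ℚ≥0}

theorem val_comp_eq_top (hω : IsIFH A B ω) {g : A.U → B.U} (hg : 0 < ω g) {f : F}
    {y : Fin (arity f) → A.U} (hy : A.val f y = ⊤) : B.val f (g ∘ y) = ⊤ := by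
  refine top_le_iff.1 (le_trans ?_ (hω.2 f (g ∘ y)))
  calc (⊤ : Val) = ω g * A.val f y := by rw [hy, WithTop.mul_top (by exact_mod_cast hg.ne')]
    _ ≤ ω g * A.preSum B g f (g ∘ y) := by
      gcongr
      exact single_le_sum (f := fun y => A.val f y) (fun _ _ => zero_le) (by simp)
    _ ≤ _ := single_le_sum (f := fun h => (ω h : Val) * A.preSum B h f (g ∘ y))
      (fun _ _ => zero_le) (mem_univ g)

theorem sum_mul_sum_le (hω : IsIFH A B ω) (f : F) {a : (Fin (arity f) → A.U) → ℚ≥0}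
    {b : (Fin (arity f) → B.U) → ℚ≥0} (ha : ∀ y, A.val f y = a y) (hb : ∀ x, B.val f x = b x)
    (c : (Fin (arity f) → B.U) → ℚ≥0) :
    ∑ g, ω g * ∑ y, c (g ∘ y) * a y ≤ ∑ x, c x * b x := by
  have hx : ∀ x, ∑ g, ω g * ∑ y with g ∘ y = x, a y ≤ b x := fun x => by
    have := hω.2 f x
    simp only [VStruct.preSum, ha, hb] at this
    exact_mod_cast this
  have fiber : ∀ g : A.U → B.U, ∑ y, c (g ∘ y) * a y = ∑ x, c x * ∑ y with g ∘ y = x, a y :=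
    fun g => by
      rw [← sum_fiberwise univ (g ∘ ·)]
      refine sum_congr rfl fun x _ => ?_
      rw [mul_sum]
      exact sum_congr rfl fun y hy => by rw [(mem_filter.1 hy).2]
  calc ∑ g, ω g * ∑ y, c (g ∘ y) * a y
      = ∑ x, c x * ∑ g, ω g * ∑ y with g ∘ y = x, a y := by
        simp only [fiber, mul_sum]
        rw [sum_comm]
        exact sum_congr rfl fun x _ => sum_congr rfl fun g _ =>
          sum_congr rfl fun y _ => mul_left_comm _ _ _
    _ ≤ ∑ x, c x * b x := sum_le_sum fun x _ => by gcongr; exact hx x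

end IsIFH

theorem NNRat.eq_of_sum_mul_le {ι : Type*} [Fintype ι] {w T : ι → ℚ≥0} {i₀ : ι}
    (hw : ∑ i, w i = 1) (hT : ∑ i, w i * T i ≤ T i₀)
    (hlt : ∀ i, 0 < w i → i ≠ i₀ → T i₀ < T i) {i : ι} (hi : 0 < w i) : i = i₀ := by
  by_contra hne
  refine (hT.trans_lt ?_).false
  calc T i₀ = ∑ j, w j * T i₀ := by rw [← sum_mul, hw, one_mul]
    _ < ∑ j, w j * T j := by
      refine sum_lt_sum (fun j _ => ?_) ⟨i, mem_univ i, mul_lt_mul_of_pos_left (hlt i hi hne) hi⟩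
      rcases eq_or_ne (w j) 0 with hj | hj
      · simp [hj]
      rcases eq_or_ne j i₀ with rfl | hj₀
      · rfl
      · exact mul_le_mul_of_nonneg_left (hlt j (pos_of_ne_zero hj) hj₀).le zero_le

namespace Grid

variable {n M : ℕ}

def level (x : Fin n × Fin n) : ℕ := x.1.val + x.2.val

-- `muC` is indexed by 1-based coordinates.
def mu (n M : ℕ) (x : Fin n × Fin n) : ℕ := muC n M (x.1.val + 1) (x.2.val + 1)

theorem arcF_iff {a b : Fin n × Fin n} :
    arcF a b ↔ (b.1.val = a.1.val + 1 ∧ b.2.val = a.2.val) ∨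
      (b.1.val = a.1.val ∧ b.2.val = a.2.val + 1) := by
  simp only [arcF, Fin.ext_iff]

theorem level_of_arcF {a b : Fin n × Fin n} (h : arcF a b) : level b = level a + 1 := by
  rw [arcF_iff] at h; unfold level; omega

theorem level_lt_of_arcF {a b : Fin n × Fin n} (h : arcF a b) : level a < level b := by
  rw [level_of_arcF h]; exact Nat.lt_succ_self _

theorem exists_arcF_of_fst_pos {x : Fin n × Fin n} (h : 0 < x.1.val) :
    ∃ p, arcF p x ∧ p.2 = x.2 :=
  ⟨(⟨x.1.val - 1, by omega⟩, x.2), arcF_iff.2 (Or.inl ⟨by simp; omega, rfl⟩), rfl⟩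

theorem exists_arcF_of_snd_pos {x : Fin n × Fin n} (h : 0 < x.2.val) :
    ∃ p, arcF p x ∧ p.1 = x.1 :=
  ⟨(x.1, ⟨x.2.val - 1, by omega⟩), arcF_iff.2 (Or.inr ⟨rfl, by simp; omega⟩), rfl⟩

theorem exists_arcF_of_snd_lt {x : Fin n × Fin n} (h : x.2.val + 1 < n) :
    ∃ z, arcF x z ∧ z.1 = x.1 :=
  ⟨(x.1, ⟨x.2.val + 1, h⟩), arcF_iff.2 (Or.inr ⟨rfl, rfl⟩), rfl⟩

theorem eq_of_arcF_of_arcF {p q x y : Fin n × Fin n} (hp : arcF p x) (hq : arcF q x)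
    (hpq : p ≠ q) (hpy : arcF p y) (hqy : arcF q y) : y = x := by
  rw [Ne, Prod.ext_iff, Fin.ext_iff, Fin.ext_iff] at hpq
  rw [arcF_iff] at hp hq hpy hqy
  ext <;> omega

theorem eq_or_of_arcF_of_arcF {p x y : Fin n × Fin n} (hx : arcF p x) (hy : arcF p y) :
    y = x ∨ (y.1.val = x.1.val + 1 ∧ y.2.val + 1 = x.2.val) ∨
      (y.1.val + 1 = x.1.val ∧ y.2.val = x.2.val + 1) := by
  rw [arcF_iff] at hx hy
  rw [Prod.ext_iff, Fin.ext_iff, Fin.ext_iff]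
  omega

theorem level_apply {g : Fin n × Fin n → Fin n × Fin n}
    (hg : ∀ a b, arcF a b → arcF (g a) (g b)) (x : Fin n × Fin n) :
    level (g x) = level x := by
  have hn : 0 < n := x.1.pos
  have shift : ∀ x, level (g x) = level (g (⟨0, hn⟩, ⟨0, hn⟩)) + level x := by
    intro x
    induction x using (measure level).wf.induction with
    | h x ih =>
      rcases Nat.eq_zero_or_pos (level x) with h0 | h0
      · have : x = (⟨0, hn⟩, ⟨0, hn⟩) := by unfold level at h0; ext <;> simp <;> omega
        rw [this]; rfl
      · obtain ⟨p, hp⟩ : ∃ p, arcF p x := by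
          unfold level at h0
          rcases Nat.eq_zero_or_pos x.1.val with h1 | h1
          · exact (exists_arcF_of_snd_pos (by omega)).imp fun _ => And.left
          · exact (exists_arcF_of_fst_pos h1).imp fun _ => And.left
        rw [level_of_arcF (hg p x hp), ih p (level_lt_of_arcF hp), level_of_arcF hp, add_assoc]
  -- The far corner has the largest level `2n - 2`, so the shift `level (g 0)` must vanish.
  have corner := shift (⟨n - 1, by omega⟩, ⟨n - 1, by omega⟩)
  have hle₁ := (g (⟨n - 1, by omega⟩, ⟨n - 1, by omega⟩)).1.isLt
  have hle₂ := (g (⟨n - 1, by omega⟩, ⟨n - 1, by omega⟩)).2.isLt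
  have := shift x
  simp only [level] at *
  omega

theorem mu_lt_of_fst_eq_zero (hM : 2 ≤ M) {x y : Fin n × Fin n} (hx₁ : x.1.val = 0)
    (hx₂ : 2 ≤ x.2.val) (hy₁ : y.1.val = 1) (hy₂ : y.2.val + 1 = x.2.val) :
    mu n M y < mu n M x := by
  have := x.2.isLt
  have h24 : M ^ 2 < M ^ 4 := Nat.pow_lt_pow_right hM (by norm_num)
  unfold mu muC
  rw [hx₁, hy₁, hy₂]
  split_ifs <;> omega

theorem mu_lt_of_snd_eq_zero (hM : 2 ≤ M) {x y : Fin n × Fin n} (hx₁ : 1 ≤ x.1.val)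
    (hx₂ : x.2.val = 0) (hy₁ : y.1.val + 1 = x.1.val) (hy₂ : y.2.val = 1) :
    mu n M y < mu n M x := by
  have := x.1.isLt
  have h23 : M ^ 2 < M ^ 3 := Nat.pow_lt_pow_right hM (by norm_num)
  unfold mu muC
  rw [hx₂, hy₁, hy₂]
  split_ifs <;> omega

theorem mu_lt_of_snd_eq_two (hM : 2 ≤ M) {x y : Fin n × Fin n} (hx₁ : x.1.val = 0)
    (hx₂ : x.2.val = 2) (hy₁ : y.1.val = 2) (hy₂ : y.2.val = 0) : mu n M y < mu n M x := by
  have := x.2.isLt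
  have h34 : M ^ 3 < M ^ 4 := Nat.pow_lt_pow_right hM (by norm_num)
  unfold mu muC
  rw [hx₁, hx₂, hy₁, hy₂]
  split_ifs <;> omega

theorem exists_mu_eq_pow (x : Fin n × Fin n) : ∃ e, mu n M x = M ^ e := by
  unfold mu muC
  split_ifs
  all_goals first | exact ⟨0, rfl⟩ | exact ⟨1, (pow_one M).symm⟩ | exact ⟨_, rfl⟩

theorem mu_pos (hM : 0 < M) (x : Fin n × Fin n) : 0 < mu n M x := by
  obtain ⟨e, he⟩ := exists_mu_eq_pow (M := M) x
  exact he ▸ pow_pos hM e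

theorem mul_mu_le_of_lt (hM : 2 ≤ M) {x y : Fin n × Fin n} (h : mu n M y < mu n M x) :
    M * mu n M y ≤ mu n M x := by
  obtain ⟨d, hd⟩ := exists_mu_eq_pow (M := M) y
  obtain ⟨e, he⟩ := exists_mu_eq_pow (M := M) x
  rw [hd, he] at h ⊢
  rw [← pow_succ']
  exact Nat.pow_le_pow_right (by omega) ((Nat.pow_lt_pow_iff_right hM).1 h)

section Rigidity

variable {g : Fin n × Fin n → Fin n × Fin n}

-- `μ` alone allows `(0,1) ↦ (1,0)`; the arc to `(0,2)`, of weight `M⁴`, rules it out.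
theorem apply_ne_of_snd_eq_one (hn : 3 ≤ n) (hM : 2 ≤ M)
    (ha : ∀ a b, arcF a b → arcF (g a) (g b)) (hb : ∀ x, mu n M x ≤ mu n M (g x))
    {x : Fin n × Fin n} (hx₁ : x.1.val = 0) (hx₂ : x.2.val = 1)
    (hy₁ : (g x).1.val = 1) (hy₂ : (g x).2.val = 0) : False := by
  obtain ⟨z, hxz, hz⟩ := exists_arcF_of_snd_lt (x := x) (by omega)
  have hz₁ : z.1.val = 0 := by rw [hz, hx₁]
  have hz₂ : z.2.val = 2 := by rw [arcF_iff] at hxz; omega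
  refine (hb z).not_gt ?_
  rcases arcF_iff.1 (ha x z hxz) with ⟨h₁, h₂⟩ | ⟨h₁, h₂⟩
  · exact mu_lt_of_snd_eq_two hM hz₁ hz₂ (by omega) (by omega)
  · exact mu_lt_of_fst_eq_zero hM hz₁ (by omega) (by omega) (by omega)

theorem apply_eq_self_of_forall_arcF (hn : 3 ≤ n) (hM : 2 ≤ M)
    (ha : ∀ a b, arcF a b → arcF (g a) (g b)) (hb : ∀ x, mu n M x ≤ mu n M (g x))
    {x : Fin n × Fin n} (hfix : ∀ p, arcF p x → g p = p) : g x = x := by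
  have hsucc : ∀ p, arcF p x → arcF p (g x) := fun p hp => hfix p hp ▸ ha p x hp
  rcases Nat.eq_zero_or_pos x.1.val with h₁ | h₁ <;>
    rcases Nat.eq_zero_or_pos x.2.val with h₂ | h₂
  · have := level_apply ha x
    unfold level at this
    ext <;> omega
  · obtain ⟨p, hp, -⟩ := exists_arcF_of_snd_pos h₂
    rcases eq_or_of_arcF_of_arcF hp (hsucc p hp) with h | ⟨hy₁, hy₂⟩ | ⟨hy₁, -⟩
    · exact h
    · rcases (show x.2.val = 1 ∨ 2 ≤ x.2.val by omega) with hx₂ | hx₂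
      · exact (apply_ne_of_snd_eq_one hn hM ha hb h₁ hx₂ (by omega) (by omega)).elim
      · exact ((hb x).not_gt (mu_lt_of_fst_eq_zero hM h₁ hx₂ (by omega) hy₂)).elim
    · omega
  · obtain ⟨p, hp, -⟩ := exists_arcF_of_fst_pos h₁
    rcases eq_or_of_arcF_of_arcF hp (hsucc p hp) with h | ⟨-, hy₂⟩ | ⟨hy₁, hy₂⟩
    · exact h
    · omega
    · exact ((hb x).not_gt (mu_lt_of_snd_eq_zero hM h₁ h₂ hy₁ (by omega))).elim
  · obtain ⟨p, hp, hp₂⟩ := exists_arcF_of_fst_pos h₁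
    obtain ⟨q, hq, hq₁⟩ := exists_arcF_of_snd_pos h₂
    have hpq : p ≠ q := fun h => by
      rw [arcF_iff] at hq; rw [h] at hp₂; rw [hp₂] at hq; omega
    exact eq_of_arcF_of_arcF hp hq hpq (hsucc p hp) (hsucc q hq)

theorem eq_id_of_arcF_of_mu_le (hn : 3 ≤ n) (hM : 2 ≤ M)
    (ha : ∀ a b, arcF a b → arcF (g a) (g b)) (hb : ∀ x, mu n M x ≤ mu n M (g x)) :
    g = id := by
  funext x
  induction x using (measure level).wf.induction with
  | h x ih =>
    exact apply_eq_self_of_forall_arcF hn hM ha hb fun p hp => ih p (level_lt_of_arcF hp)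

end Rigidity

theorem arcF_apply_of_isIFH (h0 : 0 < n) {ω : (Fin n × Fin n → Fin n × Fin n) → ℚ≥0}
    (hω : IsIFH (gridC n M h0) (gridC n M h0) ω) {g : Fin n × Fin n → Fin n × Fin n}
    (hg : 0 < ω g) {a b : Fin n × Fin n} (hab : arcF a b) : arcF (g a) (g b) := by
  have : (if arcF (g a) (g b) then (⊤ : Val) else 0) = ⊤ :=
    hω.val_comp_eq_top hg (f := GSym.f) (y := ![a, b]) (if_pos hab)
  by_contra h
  rw [if_neg h] at this
  exact WithTop.zero_ne_top this

theorem isCore_gridC (hn : 3 ≤ n) (hM : n ^ 2 < M) (h0 : 0 < n) : IsCore (gridC n M h0) := by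
  have hM₂ : 2 ≤ M := by nlinarith
  intro ω hω g hg
  let a : (Fin (gAr GSym.mu) → Fin n × Fin n) → ℚ≥0 := fun y => mu n M (y ⟨0, Nat.one_pos⟩)
  have ha : ∀ y, 0 < a y := fun y => Nat.cast_pos.2 (mu_pos (by omega) _)
  let T : (Fin n × Fin n → Fin n × Fin n) → ℚ≥0 := fun g => ∑ y, (a (g ∘ y))⁻¹ * a y
  have hT : ∑ g, ω g * T g ≤ T id :=
    hω.sum_mul_sum_le GSym.mu (fun _ => rfl) (fun _ => rfl) fun x => (a x)⁻¹
  have hid : T id = n ^ 2 := by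
    simp only [T, Function.id_comp, inv_mul_cancel₀ (ha _).ne']
    rw [sum_const, card_univ, Fintype.card_fun, Fintype.card_prod, Fintype.card_fin,
      show Fintype.card (Fin (gAr GSym.mu)) = 1 from Fintype.card_fin 1]
    simp [sq]
  have hlt : ∀ g', 0 < ω g' → g' ≠ id → T id < T g' := by
    intro g' hg' hne
    obtain ⟨u, hu⟩ : ∃ u, mu n M (g' u) < mu n M u := by
      by_contra! h
      exact hne (eq_id_of_arcF_of_mu_le hn hM₂ (fun _ _ => arcF_apply_of_isIFH h0 hω hg') h)
    calc T id = n ^ 2 := hid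
      _ < M := by exact_mod_cast hM
      _ ≤ (a (g' ∘ fun _ => u))⁻¹ * a (fun _ => u) := by
        rw [le_inv_mul_iff₀' (ha _)]
        show (M : ℚ≥0) * mu n M (g' u) ≤ mu n M u
        exact_mod_cast mul_mu_le_of_lt hM₂ hu
      _ ≤ T g' := single_le_sum (f := fun y => (a (g' ∘ y))⁻¹ * a y)
        (fun _ _ => zero_le) (mem_univ _)
  rw [NNRat.eq_of_sum_mul_le hω.1 hT hlt hg]
  exact Function.surjective_id

end Grid

/-- For `n ≥ 3` and `M > n²`: every self-map of `C_n` that preserves arcs and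
does not decrease `μ` is the identity; consequently `C_n` is a core. -/
theorem stmt19 (n M : ℕ) (hn : 3 ≤ n) (hM : n ^ 2 < M) :
    (∀ g : Fin n × Fin n → Fin n × Fin n,
      (∀ a b : Fin n × Fin n, arcF a b → arcF (g a) (g b)) →
      (∀ x : Fin n × Fin n,
        muC n M (x.1.val + 1) (x.2.val + 1) ≤
          muC n M ((g x).1.val + 1) ((g x).2.val + 1)) →
      g = id) ∧
    IsCore (gridC n M (by omega)) :=
  ⟨fun _ ha hb => Grid.eq_id_of_arcF_of_mu_le hn (by nlinarith) ha hb,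
    Grid.isCore_gridC hn hM _⟩
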